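/- arXiv:2111.04888 — 5 statements merged into one kernel-verified Lean document; each statement's English description precedes it below -/
import Mathlib

section
/- There exists a constant c > 0 such that for every n ≥ 1 and every y ∈ ℝⁿ, Σᵢ H(yᵢ) ≥ c · n^(−1/3) · min(Σᵢ |yᵢ|, Σᵢ yᵢ²), where H is the Huber loss of width 1. -/
/-!
Split the coordinates of `y` into small ones (`|yᵢ| ≤ 1`) and large ones. With `A` the sum of the
squares of the small coordinates and `B` the sum of the absolute values of the large ones, the
Huber sum is at least `(A + B) / 2`. On the other side, by Cauchy–Schwarz the small coordinates
contribute at most `√(n A)` to the `ℓ₁` sum, and the large ones at most `B²` to the squared `ℓ₂`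
sum. With `t = n^{1/3}`: if `B ≤ t`, the squared `ℓ₂` sum is at most `A + B² ≤ t (A + B)`; if
`B > t`, then `n A = t³ A ≤ t² A B`, so the `ℓ₁` sum is at most `t (A + B) + B`.
-/

/-- The Huber loss of width 1. -/
noncomputable def huber (x : ℝ) : ℝ := if |x| ≤ 1 then x ^ 2 / 2 else |x| - 1 / 2

open Finset

lemma huber_of_abs_le_one {x : ℝ} (hx : |x| ≤ 1) : huber x = x ^ 2 / 2 := if_pos hx

lemma abs_div_two_le_huber_of_one_lt_abs {x : ℝ} (hx : 1 < |x|) : |x| / 2 ≤ huber x := by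
  rw [huber, if_neg hx.not_ge]
  linarith

lemma min_add_le_two_mul_add {t A B a b : ℝ} (ht : 1 ≤ t) (hA : 0 ≤ A) (hB : 0 ≤ B)
    (ha : 0 ≤ a) (ha_sq : a ^ 2 ≤ t ^ 3 * A) (hb : b ≤ B ^ 2) :
    min (a + B) (A + b) ≤ 2 * t * (A + B) := by
  rcases le_or_gt B t with hBt | htB
  · calc min (a + B) (A + b) ≤ A + B ^ 2 := (min_le_right _ _).trans (by linarith)
      _ ≤ 2 * t * (A + B) := by nlinarith
  · have ha_le : a ≤ t * (A + B) := by
      refine (pow_le_pow_iff_left₀ ha (by positivity) two_ne_zero).mp ?_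
      calc a ^ 2 ≤ t ^ 3 * A := ha_sq
        _ = t ^ 2 * (t * A) := by ring
        _ ≤ t ^ 2 * (B * A) := by gcongr
        _ ≤ t ^ 2 * (A + B) ^ 2 := by gcongr; nlinarith
        _ = (t * (A + B)) ^ 2 := by ring
    calc min (a + B) (A + b) ≤ a + B := min_le_left _ _
      _ ≤ 2 * t * (A + B) := by nlinarith

lemma le_sum_huber {ι : Type*} (s : Finset ι) (y : ι → ℝ) :
    (∑ i ∈ s with |y i| ≤ 1, y i ^ 2 + ∑ i ∈ s with ¬|y i| ≤ 1, |y i|) / 2 ≤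
      ∑ i ∈ s, huber (y i) := by
  rw [← sum_filter_add_sum_filter_not s (fun i => |y i| ≤ 1), add_div, sum_div, sum_div]
  gcongr with i hi i hi
  · rw [huber_of_abs_le_one (mem_filter.mp hi).2]
  · exact abs_div_two_le_huber_of_one_lt_abs (not_le.mp (mem_filter.mp hi).2)

lemma min_sum_abs_sum_sq_le_mul_sum_huber {ι : Type*} [Fintype ι] (y : ι → ℝ) {t : ℝ}
    (ht : 1 ≤ t) (hcard : (Fintype.card ι : ℝ) ≤ t ^ 3) :
    min (∑ i, |y i|) (∑ i, y i ^ 2) ≤ 4 * t * ∑ i, huber (y i) := by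
  set small := univ.filter fun i => |y i| ≤ 1
  set large := univ.filter fun i => ¬|y i| ≤ 1
  have h_cauchy_schwarz : (∑ i ∈ small, |y i|) ^ 2 ≤ t ^ 3 * ∑ i ∈ small, y i ^ 2 := by
    calc (∑ i ∈ small, |y i|) ^ 2 ≤ #small * ∑ i ∈ small, |y i| ^ 2 :=
          sq_sum_le_card_mul_sum_sq
      _ ≤ t ^ 3 * ∑ i ∈ small, y i ^ 2 := by
        simp only [sq_abs]
        gcongr
        exact le_trans (by exact_mod_cast card_le_univ small) hcard
  have h_large : ∑ i ∈ large, y i ^ 2 ≤ (∑ i ∈ large, |y i|) ^ 2 := by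
    simpa only [sq_abs] using sum_sq_le_sq_sum_of_nonneg fun i _ => abs_nonneg (y i)
  have key := min_add_le_two_mul_add ht (sum_nonneg fun i _ => sq_nonneg (y i))
    (sum_nonneg fun i _ => abs_nonneg (y i)) (sum_nonneg fun i _ => abs_nonneg (y i))
    h_cauchy_schwarz h_large
  rw [← sum_filter_add_sum_filter_not univ (fun i => |y i| ≤ 1) fun i => |y i|,
    ← sum_filter_add_sum_filter_not univ (fun i => |y i| ≤ 1) fun i => y i ^ 2]
  nlinarith [le_sum_huber univ y]

theorem stmt_4 :
    ∃ c : ℝ, 0 < c ∧ ∀ n : ℕ, 1 ≤ n → ∀ y : Fin n → ℝ,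
      c * (n : ℝ) ^ (-(1 / 3) : ℝ) * min (∑ i, |y i|) (∑ i, (y i) ^ 2) ≤
        ∑ i, huber (y i) := by
  refine ⟨1 / 4, by norm_num, fun n hn y => ?_⟩
  have hn₀ : (0 : ℝ) ≤ n := n.cast_nonneg
  set t := (n : ℝ) ^ (1 / 3 : ℝ)
  have ht : 1 ≤ t := Real.one_le_rpow (by exact_mod_cast hn) (by norm_num)
  have ht_cube : t ^ 3 = n := by
    rw [← Real.rpow_natCast, ← Real.rpow_mul hn₀]
    norm_num
  have h_neg : (n : ℝ) ^ (-(1 / 3) : ℝ) = t⁻¹ := Real.rpow_neg hn₀ _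
  have key := min_sum_abs_sum_sq_le_mul_sum_huber y ht (by simp [ht_cube])
  rw [h_neg]
  calc 1 / 4 * t⁻¹ * min (∑ i, |y i|) (∑ i, y i ^ 2)
      ≤ 1 / 4 * t⁻¹ * (4 * t * ∑ i, huber (y i)) := by gcongr
    _ = ∑ i, huber (y i) := by field_simp
end

section
/- Let p > 0 and let M : ℝ≥0 → ℝ≥0 be increasing with M(0)=0 and polynomially bounded above with degree p and constant c_U ≥ 1, i.e., M(y)/M(x) ≤ c_U (y/x)^p for all 0 < x < y. Then for any x ∈ ℝⁿ with x ≠ 0, M(‖x‖_p) ≤ c_U² · Σᵢ M(|xᵢ|), where ‖x‖_p = (Σᵢ |xᵢ|^p)^(1/p). -/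
theorem stmt_9 (n : ℕ) (p c_U : ℝ) (hp : 0 < p) (hcU : 1 ≤ c_U) (M : ℝ → ℝ)
    (hM0 : M 0 = 0)
    (hmono : ∀ x y, 0 ≤ x → x ≤ y → M x ≤ M y)
    (hbound : ∀ x y, 0 < x → x < y → M y ≤ c_U * (y / x) ^ p * M x)
    (x : Fin n → ℝ) (hx : x ≠ 0) :
    M ((∑ i, |x i| ^ p) ^ (1 / p)) ≤ c_U ^ 2 * ∑ i, M |x i| := by
  have Mnn : ∀ t : ℝ, 0 ≤ t → 0 ≤ M t := fun t ht => hM0 ▸ hmono 0 t le_rfl ht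
  have hcU0 : (0:ℝ) < c_U := lt_of_lt_of_le one_pos hcU
  obtain ⟨i0, hi0⟩ : ∃ i, x i ≠ 0 := by
    by_contra h; push_neg at h; exact hx (funext h)
  obtain ⟨j, -, hj⟩ := Finset.exists_max_image Finset.univ (fun i => |x i|) ⟨i0, Finset.mem_univ i0⟩
  have hj' : ∀ i, |x i| ≤ |x j| := fun i => hj i (Finset.mem_univ i)
  have hxj : 0 < |x j| := lt_of_lt_of_le (abs_pos.mpr hi0) (hj' i0)
  have hxjp : 0 < |x j| ^ p := Real.rpow_pos_of_pos hxj p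
  have hsum_pos : 0 < ∑ i, |x i| ^ p := by
    apply Finset.sum_pos' (fun i _ => Real.rpow_nonneg (abs_nonneg _) p)
    exact ⟨i0, Finset.mem_univ i0, Real.rpow_pos_of_pos (abs_pos.mpr hi0) p⟩
  set S := (∑ i, |x i| ^ p) ^ (1 / p) with hS
  have hSpos : 0 < S := Real.rpow_pos_of_pos hsum_pos _
  have hSp : S ^ p = ∑ i, |x i| ^ p := by
    rw [hS, ← Real.rpow_mul hsum_pos.le, one_div, inv_mul_cancel₀ hp.ne', Real.rpow_one]
  have hjS : |x j| ≤ S := by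
    have h1 : |x j| ^ p ≤ S ^ p := by
      rw [hSp]
      exact Finset.single_le_sum (fun i _ => Real.rpow_nonneg (abs_nonneg _) p) (Finset.mem_univ j)
    exact (Real.rpow_le_rpow_iff (abs_nonneg _) hSpos.le hp).mp h1
  -- step 1
  have step1 : M S ≤ c_U * ((∑ i, |x i| ^ p) / |x j| ^ p) * M |x j| := by
    rcases eq_or_lt_of_le hjS with heq | hlt
    · have hr : (∑ i, |x i| ^ p) / |x j| ^ p = S ^ p / |x j| ^ p := by rw [hSp]
      rw [hr, ← heq, div_self hxjp.ne']
      calc M |x j| = 1 * M |x j| := (one_mul _).symm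
        _ ≤ c_U * 1 * M |x j| := by
            rw [mul_one]
            exact mul_le_mul_of_nonneg_right hcU (Mnn _ (abs_nonneg _))
    · have := hbound (|x j|) S hxj hlt
      rwa [Real.div_rpow hSpos.le (abs_nonneg _), hSp] at this
  -- per-term bound
  have term : ∀ i, |x i| ^ p / |x j| ^ p * M |x j| ≤ c_U * M |x i| := by
    intro i
    rcases eq_or_ne (x i) 0 with h0 | h0
    · rw [h0, abs_zero, Real.zero_rpow hp.ne', zero_div, zero_mul, hM0, mul_zero]
    · have hxi : 0 < |x i| := abs_pos.mpr h0
      rcases eq_or_lt_of_le (hj' i) with heq | hlt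
      · rw [heq, div_self hxjp.ne', one_mul]
        nlinarith [Mnn (|x j|) (abs_nonneg (x j))]
      · have hb := hbound (|x i|) (|x j|) hxi hlt
        rw [Real.div_rpow (abs_nonneg _) (abs_nonneg _)] at hb
        have hxip : 0 < |x i| ^ p := Real.rpow_pos_of_pos hxi p
        calc |x i| ^ p / |x j| ^ p * M |x j|
            ≤ |x i| ^ p / |x j| ^ p * (c_U * (|x j| ^ p / |x i| ^ p) * M |x i|) := by
              apply mul_le_mul_of_nonneg_left hb (by positivity)
          _ = c_U * M |x i| := by field_simp
  calc M S ≤ c_U * ((∑ i, |x i| ^ p) / |x j| ^ p) * M |x j| := step1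
    _ = ∑ i, c_U * (|x i| ^ p / |x j| ^ p * M |x j|) := by
        rw [Finset.sum_div, Finset.mul_sum, Finset.sum_mul]
        exact Finset.sum_congr rfl fun i _ => by ring
    _ ≤ ∑ i, c_U * (c_U * M |x i|) := by
        refine Finset.sum_le_sum fun i _ => mul_le_mul_of_nonneg_left (term i) hcU0.le
    _ = c_U ^ 2 * ∑ i, M |x i| := by
        rw [Finset.mul_sum]; exact Finset.sum_congr rfl fun i _ => by ring
end

section
/- Let p > 0 and let M : ℝ≥0 → ℝ≥0 be increasing with M(0)=0 and polynomially bounded above with degree p and constant c_U ≥ 1. Let x ∈ ℝⁿ be a nonzero vector whose entry of largest absolute value is x₁, so |x₁| ≥ |xᵢ| for all i. Then M(|x₁|) / (Σᵢ M(|xᵢ|)) ≤ c_U · |x₁|^p / (Σᵢ |xᵢ|^p). -/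
/-!
For `0 ≤ b ≤ a`, polynomial boundedness gives the cross inequality
`M a * b ^ p ≤ c * a ^ p * M b` (for `b = a` it is `c ≥ 1`, for `b = 0` both sides vanish).
Summing it over the entries `b = |xᵢ|` with `a = |x₀|` and dividing by the two sums gives
the claim.
-/

open Finset

def PolyBoundedAbove (M : ℝ → ℝ) (p c : ℝ) : Prop :=
  ∀ x y, 0 < x → x < y → M y ≤ c * (y / x) ^ p * M x

theorem PolyBoundedAbove.mul_rpow_le {M : ℝ → ℝ} {p c : ℝ} (hM : PolyBoundedAbove M p c)
    (hp : 0 < p) (hc : 1 ≤ c) (hM0 : M 0 = 0) (hMnonneg : ∀ t, 0 ≤ t → 0 ≤ M t)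
    {a b : ℝ} (hb : 0 ≤ b) (hba : b ≤ a) :
    M a * b ^ p ≤ c * a ^ p * M b := by
  rcases hb.eq_or_lt with rfl | hb
  · simp [Real.zero_rpow hp.ne', hM0]
  rcases hba.eq_or_lt with rfl | hba
  · have : 0 ≤ b ^ p * M b := mul_nonneg (by positivity) (hMnonneg b hb.le)
    nlinarith
  calc M a * b ^ p ≤ c * (a / b) ^ p * M b * b ^ p := by
        gcongr
        exact hM b a hb hba
    _ = c * ((a / b) ^ p * b ^ p) * M b := by ring
    _ = c * a ^ p * M b := by
        rw [← Real.mul_rpow (div_nonneg (hb.trans hba).le hb.le) hb.le,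
          div_mul_cancel₀ a hb.ne']

theorem div_sum_le_mul_div_sum {ι : Type*} (s : Finset ι) {u v K : ℝ} {m w : ι → ℝ}
    (hK : 0 ≤ K) (hv : 0 ≤ v) (hm : ∀ i ∈ s, 0 ≤ m i) (hw : 0 < ∑ i ∈ s, w i)
    (h : ∀ i ∈ s, u * w i ≤ K * v * m i) :
    u / ∑ i ∈ s, m i ≤ K * (v / ∑ i ∈ s, w i) := by
  rcases (sum_nonneg hm).eq_or_lt with hm0 | hm0
  · rw [← hm0, div_zero]
    positivity
  rw [← mul_div_assoc, div_le_div_iff₀ hm0 hw, mul_sum, mul_sum]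
  exact sum_le_sum h

theorem stmt_11_general (n : ℕ) (p c_U : ℝ) (hp : 0 < p) (hcU : 1 ≤ c_U) (M : ℝ → ℝ)
    (hM0 : M 0 = 0)
    (hmono : ∀ x y, 0 ≤ x → x ≤ y → M x ≤ M y)
    (hbound : ∀ x y, 0 < x → x < y → M y ≤ c_U * (y / x) ^ p * M x)
    (x : Fin (n + 1) → ℝ) (hmax : ∀ i, |x i| ≤ |x 0|) :
    M |x 0| / (∑ i, M |x i|) ≤ c_U * (|x 0| ^ p / ∑ i, |x i| ^ p) := by
  have hMnonneg : ∀ t, 0 ≤ t → 0 ≤ M t := fun t ht => hM0 ▸ hmono 0 t le_rfl ht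
  rcases (abs_nonneg (x 0)).eq_or_lt with hx0 | hx0
  · rw [← hx0, hM0, Real.zero_rpow hp.ne', zero_div, zero_div, mul_zero]
  have hsum : 0 < ∑ i, |x i| ^ p :=
    (Real.rpow_pos_of_pos hx0 p).trans_le <|
      single_le_sum (f := fun i => |x i| ^ p) (fun i _ => by positivity) (mem_univ 0)
  exact div_sum_le_mul_div_sum _ (by linarith) (by positivity)
    (fun i _ => hMnonneg _ (abs_nonneg _)) hsum
    (fun i _ => PolyBoundedAbove.mul_rpow_le hbound hp hcU hM0 hMnonneg (abs_nonneg _) (hmax i))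

theorem stmt_11 (n : ℕ) (p c_U : ℝ) (hp : 0 < p) (hcU : 1 ≤ c_U) (M : ℝ → ℝ)
    (hM0 : M 0 = 0)
    (hmono : ∀ x y, 0 ≤ x → x ≤ y → M x ≤ M y)
    (hbound : ∀ x y, 0 < x → x < y → M y ≤ c_U * (y / x) ^ p * M x)
    (x : Fin (n + 1) → ℝ) (hx : x ≠ 0) (hmax : ∀ i, |x i| ≤ |x 0|) :
    M |x 0| / (∑ i, M |x i|) ≤ c_U * (|x 0| ^ p / ∑ i, |x i| ^ p) :=
  stmt_11_general n p c_U hp hcU M hM0 hmono hbound x hmax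
end

section
/- Let 0 < p < 2 and let U ∈ ℝ^{n×d} with rows u₁,…,uₙ, each nonzero, and let D = diag(‖u₁‖₂,…,‖uₙ‖₂). Suppose D^(p/2−1)·U has orthonormal columns. Then for all x ∈ ℝ^d: ‖x‖₂ ≤ ‖Ux‖_p ≤ d^(1/p − 1/2) · ‖x‖₂, where ‖Ux‖_p = (Σᵢ |⟨uᵢ, x⟩|^p)^(1/p). -/
open Matrix in
theorem stmt_14 (n d : ℕ) (p : ℝ) (hp0 : 0 < p) (hp2 : p < 2)
    (U : Matrix (Fin n) (Fin d) ℝ) (r : Fin n → ℝ)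
    (hr : ∀ i, r i = Real.sqrt (∑ j, (U i j) ^ 2))
    (hrpos : ∀ i, 0 < r i)
    (horth : (Matrix.of fun i j => r i ^ (p / 2 - 1) * U i j)ᵀ *
        (Matrix.of fun i j => r i ^ (p / 2 - 1) * U i j) = 1)
    (x : Fin d → ℝ) :
    Real.sqrt (∑ j, (x j) ^ 2) ≤ (∑ i, |U.mulVec x i| ^ p) ^ (1 / p) ∧
      (∑ i, |U.mulVec x i| ^ p) ^ (1 / p) ≤
        (d : ℝ) ^ (1 / p - 1 / 2) * Real.sqrt (∑ j, (x j) ^ 2) := by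
  have hp2' : (0:ℝ) < 2 - p := by linarith
  have hpne : p ≠ 0 := hp0.ne'
  have rpow_two : ∀ y : ℝ, y ^ (2:ℝ) = y ^ 2 := fun y => by
    rw [show (2:ℝ) = ((2:ℕ):ℝ) by norm_num, Real.rpow_natCast]
  set W : Matrix (Fin n) (Fin d) ℝ := Matrix.of fun i j => r i ^ (p / 2 - 1) * U i j with hW
  set a : Fin n → ℝ := U.mulVec x with ha
  set s : ℝ := Real.sqrt (∑ j, (x j) ^ 2) with hs
  have hs0 : 0 ≤ s := Real.sqrt_nonneg _
  have hs2 : s ^ 2 = ∑ j, (x j) ^ 2 :=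
    Real.sq_sqrt (Finset.sum_nonneg fun j _ => sq_nonneg _)
  set S : ℝ := ∑ i, |a i| ^ p with hS
  have hS0 : 0 ≤ S :=
    Finset.sum_nonneg fun i _ => Real.rpow_nonneg (abs_nonneg _) _
  have hr2 : ∀ i, r i ^ 2 = ∑ j, (U i j) ^ 2 := by
    intro i
    rw [hr i, Real.sq_sqrt (Finset.sum_nonneg fun j _ => sq_nonneg _)]
  have hwa : ∀ i, W.mulVec x i = r i ^ (p / 2 - 1) * a i := by
    intro i
    simp [hW, ha, Matrix.mulVec, dotProduct, Finset.mul_sum, mul_assoc]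
  -- key A : ∑ i, (W.mulVec x i)^2 = s ^ 2
  have keyA : ∑ i, (W.mulVec x i) ^ 2 = s ^ 2 := by
    have h1 : ∑ i, (W.mulVec x i) ^ 2 = (W.mulVec x) ⬝ᵥ (W.mulVec x) := by
      simp [dotProduct, sq]
    have h2 : (W.mulVec x) ⬝ᵥ (W.mulVec x) = x ⬝ᵥ x := by
      rw [Matrix.dotProduct_mulVec, ← Matrix.mulVec_transpose, Matrix.mulVec_mulVec,
        horth, Matrix.one_mulVec]
    rw [h1, h2, hs2]; simp [dotProduct, sq]
  -- key B : ∑ i, r i ^ p = d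
  have keyB : ∑ i, (r i) ^ p = (d : ℝ) := by
    have hdiag : ∀ j : Fin d, ∑ i, (W i j) ^ 2 = 1 := by
      intro j
      have := congrFun (congrFun horth j) j
      simpa [Matrix.mul_apply, Matrix.one_apply, sq, mul_comm] using this
    have hswap : ∑ j, ∑ i, (W i j) ^ 2 = (d : ℝ) := by simp [hdiag]
    rw [Finset.sum_comm] at hswap
    rw [← hswap]
    refine Finset.sum_congr rfl fun i _ => ?_
    have hri := (hrpos i).le
    have h3 : ∑ j, (W i j) ^ 2 = (r i) ^ (p - 2) * ∑ j, (U i j) ^ 2 := by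
      rw [Finset.mul_sum]
      refine Finset.sum_congr rfl fun j _ => ?_
      have h4 : (r i ^ (p / 2 - 1)) ^ 2 = (r i) ^ (p - 2) := by
        rw [← rpow_two, ← Real.rpow_mul hri]
        congr 1
        ring
      simp [hW, mul_pow, h4]
    rw [h3, ← hr2 i, ← rpow_two, ← Real.rpow_add (hrpos i)]
    congr 1
    ring
  -- key C : |a i| ≤ r i * s
  have keyC : ∀ i, |a i| ≤ r i * s := by
    intro i
    have hcs := Finset.sum_mul_sq_le_sq_mul_sq Finset.univ (U i) x
    have h1 : |a i| = Real.sqrt ((a i) ^ 2) := (Real.sqrt_sq_eq_abs _).symm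
    rw [h1, ha]
    have h2 : (U.mulVec x i) ^ 2 ≤ (r i * s) ^ 2 := by
      rw [mul_pow, hr2, hs2]
      simpa [Matrix.mulVec, dotProduct] using hcs
    calc Real.sqrt ((U.mulVec x i) ^ 2) ≤ Real.sqrt ((r i * s) ^ 2) :=
          Real.sqrt_le_sqrt h2
      _ = r i * s := Real.sqrt_sq (mul_nonneg (hrpos i).le hs0)
  -- exponent cancellation
  have hcan : ∀ i, (r i ^ (p/2-1)) ^ p * (r i) ^ (p * (2 - p) / 2) = 1 := by
    intro i
    rw [← Real.rpow_mul (hrpos i).le, ← Real.rpow_add (hrpos i),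
      show (p/2-1)*p + p*(2-p)/2 = 0 by ring, Real.rpow_zero]
  have keyD : ∀ i, |a i| ^ p = |W.mulVec x i| ^ p * (r i) ^ (p * (2 - p) / 2) := by
    intro i
    have hri := (hrpos i).le
    rw [hwa i, abs_mul, abs_of_nonneg (Real.rpow_nonneg hri _),
      Real.mul_rpow (Real.rpow_nonneg hri _) (abs_nonneg _),
      mul_right_comm, hcan i, one_mul]
  have hw2 : ∀ i, |W.mulVec x i| ^ (2:ℝ) = (W.mulVec x i) ^ 2 := by
    intro i
    rw [rpow_two, sq_abs]
  constructor
  · -- lower bound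
    rcases eq_or_lt_of_le hs0 with hse | hsp
    · rw [← hse]
      exact Real.rpow_nonneg hS0 _
    · have key : s ^ (2:ℝ) ≤ s ^ ((2:ℝ) - p) * S := by
        have hterm : ∀ i, (W.mulVec x i) ^ 2 ≤ s ^ ((2:ℝ) - p) * |a i| ^ p := by
          intro i
          have hri := (hrpos i).le
          have hwb : |W.mulVec x i| ≤ (r i) ^ (p/2) * s := by
            rw [hwa i, abs_mul, abs_of_nonneg (Real.rpow_nonneg hri _)]
            calc (r i) ^ (p/2-1) * |a i| ≤ (r i) ^ (p/2-1) * (r i * s) :=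
                  mul_le_mul_of_nonneg_left (keyC i) (Real.rpow_nonneg hri _)
              _ = (r i) ^ (p/2) * s := by
                  rw [← mul_assoc]
                  congr 1
                  rw [← Real.rpow_add_one (hrpos i).ne']
                  norm_num
          calc (W.mulVec x i) ^ 2 = |W.mulVec x i| ^ ((2:ℝ) - p) * |W.mulVec x i| ^ p := by
                rw [← Real.rpow_add' (abs_nonneg _) (by norm_num), sub_add_cancel, hw2 i]
            _ ≤ ((r i) ^ (p/2) * s) ^ ((2:ℝ) - p) * |W.mulVec x i| ^ p :=
                mul_le_mul_of_nonneg_right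
                  (Real.rpow_le_rpow (abs_nonneg _) hwb hp2'.le)
                  (Real.rpow_nonneg (abs_nonneg _) _)
            _ = s ^ ((2:ℝ) - p) * (|W.mulVec x i| ^ p * (r i) ^ (p * (2 - p) / 2)) := by
                rw [Real.mul_rpow (Real.rpow_nonneg hri _) hs0, ← Real.rpow_mul hri,
                  show p/2 * (2 - p) = p * (2 - p) / 2 by ring]
                ring
            _ = s ^ ((2:ℝ) - p) * |a i| ^ p := by rw [← keyD i]
        calc s ^ (2:ℝ) = ∑ i, (W.mulVec x i) ^ 2 := by rw [keyA, rpow_two]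
          _ ≤ ∑ i, s ^ ((2:ℝ) - p) * |a i| ^ p := Finset.sum_le_sum fun i _ => hterm i
          _ = s ^ ((2:ℝ) - p) * S := by rw [hS, Finset.mul_sum]
      have hsple : s ^ p ≤ S := by
        have h1 : s ^ ((2:ℝ) - p) * s ^ p ≤ s ^ ((2:ℝ) - p) * S := by
          rw [← Real.rpow_add hsp]; simpa using key
        exact le_of_mul_le_mul_left h1 (Real.rpow_pos_of_pos hsp _)
      calc s = (s ^ p) ^ (1/p) := by
            rw [← Real.rpow_mul hs0, mul_one_div, div_self hpne, Real.rpow_one]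
        _ ≤ S ^ (1/p) := Real.rpow_le_rpow (Real.rpow_nonneg hs0 _) hsple (by positivity)
  · -- upper bound
    have hconj : Real.HolderConjugate (2/p) (2/(2-p)) := by
      rw [Real.holderConjugate_iff]; constructor
      · rw [lt_div_iff₀ hp0]; linarith
      · have h2p : (2:ℝ) - p ≠ 0 := hp2'.ne'
        field_simp; ring
    have hholder := Real.inner_le_Lp_mul_Lq_of_nonneg Finset.univ hconj
      (f := fun i => |W.mulVec x i| ^ p)
      (g := fun i => (r i) ^ (p * (2 - p) / 2))
      (fun i _ => Real.rpow_nonneg (abs_nonneg _) _)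
      (fun i _ => Real.rpow_nonneg (hrpos i).le _)
    have hfeq : ∀ i : Fin n, (|W.mulVec x i| ^ p) ^ (2/p) = (W.mulVec x i) ^ 2 := by
      intro i
      rw [← Real.rpow_mul (abs_nonneg _), show p * (2/p) = 2 by field_simp, hw2 i]
    have hgeq : ∀ i : Fin n, ((r i) ^ (p * (2 - p) / 2)) ^ (2/(2-p)) = (r i) ^ p := by
      intro i
      rw [← Real.rpow_mul (hrpos i).le]
      congr 1
      have h2p : (2:ℝ) - p ≠ 0 := hp2'.ne'
      field_simp
    have hub : S ≤ (s ^ 2) ^ (p/2) * (d:ℝ) ^ ((2-p)/2) := by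
      calc S = ∑ i, |W.mulVec x i| ^ p * (r i) ^ (p * (2 - p) / 2) :=
            Finset.sum_congr rfl fun i _ => keyD i
        _ ≤ (∑ i, (|W.mulVec x i| ^ p) ^ (2/p)) ^ (1/(2/p)) *
              (∑ i, ((r i) ^ (p * (2 - p) / 2)) ^ (2/(2-p))) ^ (1/(2/(2-p))) := hholder
        _ = (s ^ 2) ^ (p/2) * (d:ℝ) ^ ((2-p)/2) := by
            rw [Finset.sum_congr rfl fun i _ => hfeq i,
              Finset.sum_congr rfl fun i _ => hgeq i, keyA, keyB,
              one_div_div, one_div_div]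
    calc S ^ (1/p) ≤ ((s ^ 2) ^ (p/2) * (d:ℝ) ^ ((2-p)/2)) ^ (1/p) :=
          Real.rpow_le_rpow hS0 hub (by positivity)
      _ = (d : ℝ) ^ (1/p - 1/2) * s := by
          rw [Real.mul_rpow (Real.rpow_nonneg (sq_nonneg s) _)
              (Real.rpow_nonneg (Nat.cast_nonneg d) _),
            ← Real.rpow_mul (sq_nonneg s), ← Real.rpow_mul (Nat.cast_nonneg d),
            show p/2 * (1/p) = 1/2 by field_simp,
            show (2-p)/2 * (1/p) = 1/p - 1/2 by field_simp,
            ← Real.sqrt_eq_rpow, Real.sqrt_sq hs0, mul_comm]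
end

section
/- Let 0 < p < 2 and let U ∈ ℝ^{n×d} with nonzero rows uᵢ and D = diag(‖uᵢ‖₂) such that D^(p/2−1)U has orthonormal columns. Then for every x ∈ ℝ^d and every i, |⟨uᵢ, x⟩|^p ≤ ‖uᵢ‖₂^p · ‖Ux‖_p^p. That is, the ℓ_p sensitivity of row i of U is at most its ℓ_p Lewis weight ‖uᵢ‖₂^p. -/
/-!
Put `y = U x` and `rₖ = ‖uₖ‖₂`. Since `W = D^(p/2-1) U` has orthonormal columns,
`‖x‖₂² = ‖W x‖₂² = ∑ₖ rₖ^(p-2) yₖ²`, so Cauchy–Schwarz on row `m` gives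
`yₘ² ≤ rₘ² ∑ₖ rₖ^(p-2) yₖ²`. In the variables `sₖ = |yₖ|/rₖ` and `aₖ = rₖ^p` this reads
`sₘ² ≤ ∑ₖ aₖ sₖ²`; taking `m` with `sₘ` maximal and bounding `sₖ² ≤ sₘ^(2-p) sₖ^p` yields
`sₘ^p ≤ ∑ₖ aₖ sₖ^p = ∑ₖ |yₖ|^p`, and `|yᵢ|^p = rᵢ^p sᵢ^p ≤ rᵢ^p sₘ^p`.
-/

open Matrix Finset Real

lemma sq_le_rpow_mul_rpow {s t p : ℝ} (hs : 0 ≤ s) (hst : s ≤ t) (hp : p ≤ 2) :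
    s ^ 2 ≤ t ^ (2 - p) * s ^ p := by
  calc s ^ 2 = s ^ (2 - p) * s ^ p := by
        rw [← rpow_add' hs (by norm_num), sub_add_cancel, rpow_two]
    _ ≤ t ^ (2 - p) * s ^ p := by gcongr

lemma rpow_le_sum_mul_rpow_of_sq_le_sum {ι : Type*} [Fintype ι] {a s : ι → ℝ} {p : ℝ}
    (hp0 : 0 < p) (hp2 : p ≤ 2) (ha : ∀ k, 0 ≤ a k) (hs : ∀ k, 0 ≤ s k)
    (h : ∀ m, s m ^ 2 ≤ ∑ k, a k * s k ^ 2) (i : ι) :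
    s i ^ p ≤ ∑ k, a k * s k ^ p := by
  obtain ⟨m, -, hm⟩ := exists_max_image univ s ⟨i, mem_univ i⟩
  suffices s m ^ p ≤ ∑ k, a k * s k ^ p from
    (rpow_le_rpow (hs i) (hm i (mem_univ i)) hp0.le).trans this
  rcases (hs m).eq_or_lt with hzero | hpos
  · rw [← hzero, zero_rpow hp0.ne']
    exact sum_nonneg fun k _ => mul_nonneg (ha k) (rpow_nonneg (hs k) p)
  · refine le_of_mul_le_mul_left ?_ (rpow_pos_of_pos hpos (2 - p))
    calc s m ^ (2 - p) * s m ^ p = s m ^ 2 := by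
          rw [← rpow_add hpos, sub_add_cancel, rpow_two]
      _ ≤ ∑ k, a k * s k ^ 2 := h m
      _ ≤ ∑ k, a k * (s m ^ (2 - p) * s k ^ p) := by
          gcongr with k
          · exact ha k
          · exact sq_le_rpow_mul_rpow (hs k) (hm k (mem_univ k)) hp2
      _ = s m ^ (2 - p) * ∑ k, a k * s k ^ p := by
          rw [mul_sum]
          exact sum_congr rfl fun k _ => by ring

lemma abs_rpow_le_rpow_mul_sum_of_sq_le {ι : Type*} [Fintype ι] {y r : ι → ℝ} {p : ℝ}
    (hp0 : 0 < p) (hp2 : p ≤ 2) (hr : ∀ k, 0 < r k)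
    (h : ∀ m, y m ^ 2 ≤ r m ^ 2 * ∑ k, r k ^ (p - 2) * y k ^ 2) (i : ι) :
    |y i| ^ p ≤ r i ^ p * ∑ k, |y k| ^ p := by
  have hs : ∀ k, r k ^ p * (|y k| / r k) ^ p = |y k| ^ p := fun k => by
    rw [div_rpow (abs_nonneg _) (hr k).le, mul_div_cancel₀ _ (rpow_pos_of_pos (hr k) p).ne']
  have key := rpow_le_sum_mul_rpow_of_sq_le_sum hp0 hp2 (fun k => (rpow_pos_of_pos (hr k) p).le)
    (fun k => div_nonneg (abs_nonneg (y k)) (hr k).le) ?_ i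
  · simp only [hs] at key
    rw [← hs i]
    exact mul_le_mul_of_nonneg_left key (rpow_pos_of_pos (hr i) p).le
  · intro m
    have hterm : ∀ k, r k ^ p * (|y k| / r k) ^ 2 = r k ^ (p - 2) * y k ^ 2 := fun k => by
      rw [rpow_sub (hr k), rpow_two, div_pow, sq_abs]
      ring
    rw [div_pow, sq_abs, div_le_iff₀ (pow_pos (hr m) 2), mul_comm]
    simpa only [hterm] using h m

lemma dotProduct_mulVec_self_of_transpose_mul_self_eq_one {m n R : Type*} [Fintype m]
    [Fintype n] [DecidableEq n] [CommSemiring R] {A : Matrix m n R} (hA : Aᵀ * A = 1)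
    (x : n → R) : A *ᵥ x ⬝ᵥ A *ᵥ x = x ⬝ᵥ x := by
  rw [dotProduct_mulVec, ← mulVec_transpose, mulVec_mulVec, hA, one_mulVec]

lemma sq_mulVec_le_of_diagonal_mul_orthonormal {m n : Type*} [Fintype m] [Fintype n]
    [DecidableEq m] [DecidableEq n] (U : Matrix m n ℝ) (w : m → ℝ)
    (hU : (diagonal w * U)ᵀ * (diagonal w * U) = 1) (x : n → ℝ) (i : m) :
    (U *ᵥ x) i ^ 2 ≤ (∑ j, U i j ^ 2) * ∑ k, w k ^ 2 * (U *ᵥ x) k ^ 2 := by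
  have hnorm := dotProduct_mulVec_self_of_transpose_mul_self_eq_one hU x
  simp only [← mulVec_mulVec, dotProduct, mulVec_diagonal] at hnorm
  calc (U *ᵥ x) i ^ 2 = (∑ j, U i j * x j) ^ 2 := rfl
    _ ≤ (∑ j, U i j ^ 2) * ∑ j, x j ^ 2 := sum_mul_sq_le_sq_mul_sq _ _ _
    _ = (∑ j, U i j ^ 2) * ∑ k, w k ^ 2 * (U *ᵥ x) k ^ 2 := by
        simp only [sq, ← hnorm, mul_mul_mul_comm]

open Matrix in
theorem stmt_15 (n d : ℕ) (p : ℝ) (hp0 : 0 < p) (hp2 : p < 2)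
    (U : Matrix (Fin n) (Fin d) ℝ) (r : Fin n → ℝ)
    (hr : ∀ i, r i = Real.sqrt (∑ j, (U i j) ^ 2))
    (hrpos : ∀ i, 0 < r i)
    (horth : (Matrix.of fun i j => r i ^ (p / 2 - 1) * U i j)ᵀ *
        (Matrix.of fun i j => r i ^ (p / 2 - 1) * U i j) = 1)
    (x : Fin d → ℝ) (i : Fin n) :
    |U.mulVec x i| ^ p ≤ r i ^ p * ∑ k, |U.mulVec x k| ^ p := by
  have hW : (Matrix.of fun i j => r i ^ (p / 2 - 1) * U i j) =
      diagonal (fun k => r k ^ (p / 2 - 1)) * U := by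
    ext
    simp [diagonal_mul]
  have hrow : ∀ k, ∑ j, U k j ^ 2 = r k ^ 2 := fun k => by
    rw [hr k, sq_sqrt (sum_nonneg fun j _ => sq_nonneg _)]
  have hw : ∀ k, (r k ^ (p / 2 - 1)) ^ 2 = r k ^ (p - 2) := fun k => by
    rw [← rpow_two, ← rpow_mul (hrpos k).le]
    ring_nf
  refine abs_rpow_le_rpow_mul_sum_of_sq_le hp0 hp2.le hrpos (fun m => ?_) i
  have := sq_mulVec_le_of_diagonal_mul_orthonormal U _ (hW ▸ horth) x m
  beta_reduce at this
  simpa only [hrow, hw] using this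
end
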